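/- If d is the distance matrix of a strict negative type metric on [N] with N ≥ 2, then 1^T d^{-1} 1 > 0, i.e., the sum of all entries of the inverse distance matrix is strictly positive. -/

import Mathlib

/-!
Write `Q x = xᵀ d x`. For a nonzero `y` with `d y = c • 1` we have `Q y = c · ∑ y`, which
forces `∑ y ≠ 0` by strict negative type. If some `v` has `Q v > 0`, then
`z = v - (∑ v / ∑ y) • y` sums to zero, so `0 ≥ Q z = Q v - c (∑ v)² / ∑ y`, whence `c · ∑ y > 0`.
With `c = 0` this excludes a kernel, so `d` is invertible; with `c = 1` and `y = d⁻¹ 1` it is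
the theorem. For `i ≠ j` the vector `v = eᵢ + eⱼ` has `Q v = 2 dᵢⱼ > 0`.
-/

open Matrix

namespace Matrix

variable {ι : Type*} [Fintype ι]

theorem IsSymm.dotProduct_mulVec_comm {A : Matrix ι ι ℝ} (hA : A.IsSymm) (x y : ι → ℝ) :
    x ⬝ᵥ A *ᵥ y = y ⬝ᵥ A *ᵥ x := by
  rw [dotProduct_mulVec, ← mulVec_transpose, hA.eq, dotProduct_comm]

theorem single_add_single_dotProduct_mulVec [DecidableEq ι] (A : Matrix ι ι ℝ) (i j : ι) :
    (Pi.single i 1 + Pi.single j 1) ⬝ᵥ A *ᵥ (Pi.single i 1 + Pi.single j 1) =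
      A i i + A i j + A j i + A j j := by
  simp only [mulVec_add, mulVec_single_one, add_dotProduct, single_one_dotProduct, col_apply,
    Pi.add_apply]
  ring

def IsStrictNegType (A : Matrix ι ι ℝ) : Prop :=
  ∀ x : ι → ℝ, x ≠ 0 → ∑ i, x i = 0 → x ⬝ᵥ A *ᵥ x < 0

namespace IsStrictNegType

variable {A : Matrix ι ι ℝ}

theorem mul_sum_pos_of_mulVec_eq_smul_one (hneg : A.IsStrictNegType) (hA : A.IsSymm)
    {v : ι → ℝ} (hv : 0 < v ⬝ᵥ A *ᵥ v) {y : ι → ℝ} (hy : y ≠ 0) {c : ℝ}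
    (hAy : A *ᵥ y = c • 1) : 0 < c * ∑ i, y i := by
  set s := ∑ i, y i
  set σ := ∑ i, v i
  have hQy : y ⬝ᵥ A *ᵥ y = c * s := by
    rw [hAy, dotProduct_smul, dotProduct_one, smul_eq_mul]
  have hs : s ≠ 0 := fun hs => (hneg y hy hs).ne (by rw [hQy, hs, mul_zero])
  have hvAy : v ⬝ᵥ A *ᵥ y = c * σ := by
    rw [hAy, dotProduct_smul, dotProduct_one, smul_eq_mul]
  set z := v - (σ / s) • y
  have hz : ∑ i, z i = 0 := by
    simp only [z, Pi.sub_apply, Pi.smul_apply, smul_eq_mul, Finset.sum_sub_distrib,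
      ← Finset.mul_sum]
    field_simp
    ring
  have hQz : z ⬝ᵥ A *ᵥ z = v ⬝ᵥ A *ᵥ v - c * s * (σ / s) ^ 2 := by
    simp only [z, mulVec_sub, mulVec_smul, sub_dotProduct, dotProduct_sub, smul_dotProduct,
      dotProduct_smul, smul_eq_mul, hQy, hvAy, hA.dotProduct_mulVec_comm y v]
    field_simp
    ring
  have hQz_nonpos : z ⬝ᵥ A *ᵥ z ≤ 0 := by
    rcases eq_or_ne z 0 with h0 | h0
    · simp [h0]
    · exact (hneg z h0 hz).le
  have : 0 < c * s * (σ / s) ^ 2 := by linarith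
  exact pos_of_mul_pos_left this (sq_nonneg _)

theorem isUnit_det [DecidableEq ι] (hneg : A.IsStrictNegType) (hA : A.IsSymm)
    {v : ι → ℝ} (hv : 0 < v ⬝ᵥ A *ᵥ v) : IsUnit A.det := by
  rw [isUnit_iff_ne_zero]
  intro hdet
  obtain ⟨x, hx, hAx⟩ := exists_mulVec_eq_zero_iff.2 hdet
  have := hneg.mul_sum_pos_of_mulVec_eq_smul_one hA hv hx (c := 0) (by rw [hAx, zero_smul])
  exact this.ne (zero_mul _).symm

theorem one_dotProduct_inv_mulVec_one_pos [DecidableEq ι] [Nonempty ι]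
    (hneg : A.IsStrictNegType) (hA : A.IsSymm)
    {v : ι → ℝ} (hv : 0 < v ⬝ᵥ A *ᵥ v) : 0 < 1 ⬝ᵥ A⁻¹ *ᵥ 1 := by
  have hAy : A *ᵥ (A⁻¹ *ᵥ 1) = 1 := by
    rw [mulVec_mulVec, mul_nonsing_inv A (hneg.isUnit_det hA hv), one_mulVec]
  have hy : A⁻¹ *ᵥ 1 ≠ 0 := fun h => by
    rw [h, mulVec_zero] at hAy
    exact zero_ne_one (congrFun hAy (Classical.arbitrary ι))
  have := hneg.mul_sum_pos_of_mulVec_eq_smul_one hA hv hy (c := 1) (by rw [hAy, one_smul])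
  rwa [one_mul, ← one_dotProduct] at this

end IsStrictNegType

end Matrix

theorem stmt1_general {N : ℕ} (hN : 2 ≤ N) (d : Matrix (Fin N) (Fin N) ℝ)
    (hsymm : d.IsSymm) (hdiag : ∀ i, d i i = 0)
    (hpos : ∀ i j, i ≠ j → 0 < d i j)
    (hSNT : ∀ x : Fin N → ℝ, x ≠ 0 → ∑ i, x i = 0 → x ⬝ᵥ d.mulVec x < 0) :
    0 < (1 : Fin N → ℝ) ⬝ᵥ d⁻¹.mulVec (1 : Fin N → ℝ) := by
  obtain ⟨i, j, hij⟩ : ∃ i j : Fin N, i ≠ j :=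
    ⟨⟨0, by omega⟩, ⟨1, by omega⟩, by simp [Fin.ext_iff]⟩
  have : Nonempty (Fin N) := ⟨i⟩
  refine IsStrictNegType.one_dotProduct_inv_mulVec_one_pos hSNT hsymm
    (v := Pi.single i 1 + Pi.single j 1) ?_
  rw [single_add_single_dotProduct_mulVec, hdiag, hdiag]
  linarith [hpos i j hij, hpos j i hij.symm]

/-- If `d` is the distance matrix of a strict negative type metric on `[N]` with `N ≥ 2`,
then `1ᵀ d⁻¹ 1 > 0`. -/
theorem stmt1 {N : ℕ} (hN : 2 ≤ N) (d : Matrix (Fin N) (Fin N) ℝ)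
    (hsymm : d.IsSymm) (hdiag : ∀ i, d i i = 0)
    (hpos : ∀ i j, i ≠ j → 0 < d i j)
    (htri : ∀ i j k, d i k ≤ d i j + d j k)
    (hSNT : ∀ x : Fin N → ℝ, x ≠ 0 → ∑ i, x i = 0 → x ⬝ᵥ d.mulVec x < 0) :
    0 < (1 : Fin N → ℝ) ⬝ᵥ d⁻¹.mulVec (1 : Fin N → ℝ) :=
  stmt1_general hN d hsymm hdiag hpos hSNT
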